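/- The function g on Σ_q² defined by g(x,y) = 1 if x=y=0, g(x,y) = -1 if x=y=q-1, and g(x,y)=0 otherwise, lies in U_{[1,2]}(2,q) (the sum of the eigenspaces of H(2,q) for eigenvalues q-2 and -2), and its support has cardinality 2, which equals the minimum 2^1(q-1)^{2-2}. -/

import Mathlib

/-- Sum of `f` over the neighbors of `x` in the Hamming graph `H(n,q)`. -/
noncomputable def adjSum (n q : ℕ) (f : (Fin n → Fin q) → ℝ) (x : Fin n → Fin q) : ℝ :=
  ∑ y : Fin n → Fin q, if hammingDist x y = 1 then f y else 0

/-- `f` satisfies the eigenfunction equation for eigenvalue `lam` on `H(n,q)`. -/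
def IsEigenfun (n q : ℕ) (lam : ℝ) (f : (Fin n → Fin q) → ℝ) : Prop :=
  ∀ x, adjSum n q f x = lam * f x

/-- `f ∈ U_i(n,q)`, the eigenspace for eigenvalue `n(q-1) - q i`. -/
def memU (n q i : ℕ) (f : (Fin n → Fin q) → ℝ) : Prop :=
  IsEigenfun n q ((n : ℝ) * ((q : ℝ) - 1) - (q : ℝ) * (i : ℝ)) f

/-- `f ∈ U_{[i,j]}(n,q) = U_i ⊕ ⋯ ⊕ U_j`. -/
def memUI (n q i j : ℕ) (f : (Fin n → Fin q) → ℝ) : Prop :=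
  ∃ g : ℕ → (Fin n → Fin q) → ℝ,
    (∀ t ∈ Finset.Icc i j, memU n q t (g t)) ∧ f = ∑ t ∈ Finset.Icc i j, g t

/-- The cardinality of the support of `f : Σ_q^n → ℝ`. -/
noncomputable def suppCard (n q : ℕ) (f : (Fin n → Fin q) → ℝ) : ℕ :=
  Nat.card {x : Fin n → Fin q // f x ≠ 0}

/-! On `Σ_q²` the Hamming graph is the Cartesian square of `K_q`, so the adjacency operator acts
on a tensor `φ ⊗ ψ` as `Kφ ⊗ ψ + φ ⊗ Kψ` with `Kφ = ∑ φ - φ`. Hence for `∑ φ = 0` the tensor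
`φ ⊗ 1` lies in `U_1` (eigenvalue `q - 2`), and `φ ⊗ ψ` with also `∑ ψ = 0` lies in `U_2`
(eigenvalue `-2`); splitting `ψ` into its mean and a sum-zero part puts every `φ ⊗ ψ` with
`∑ φ = 0` into `U_1 ⊕ U_2`. Finally `g = (δ₀ - δ_{q-1}) ⊗ δ₀ + δ_{q-1} ⊗ (δ₀ - δ_{q-1})`, and its
support consists of the two diagonal points `(0,0)` and `(q-1,q-1)`. -/

section General

variable {n q i : ℕ}

lemma adjSum_add (f g : (Fin n → Fin q) → ℝ) (x : Fin n → Fin q) :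
    adjSum n q (f + g) x = adjSum n q f x + adjSum n q g x := by
  rw [adjSum, adjSum, adjSum, ← Finset.sum_add_distrib]
  refine Finset.sum_congr rfl fun y _ => ?_
  split_ifs <;> simp

lemma memU_add {f g : (Fin n → Fin q) → ℝ} (hf : memU n q i f) (hg : memU n q i g) :
    memU n q i (f + g) := fun x => by
  rw [adjSum_add, hf x, hg x, Pi.add_apply, mul_add]

lemma memUI_add {j : ℕ} {f g : (Fin n → Fin q) → ℝ} (hf : memUI n q i j f)
    (hg : memUI n q i j g) : memUI n q i j (f + g) := by
  obtain ⟨F, hF, rfl⟩ := hf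
  obtain ⟨G, hG, rfl⟩ := hg
  exact ⟨F + G, fun t ht => memU_add (hF t ht) (hG t ht), by simp [Finset.sum_add_distrib]⟩

lemma memUI_succ_add {f g : (Fin n → Fin q) → ℝ} (hf : memU n q i f) (hg : memU n q (i + 1) g) :
    memUI n q i (i + 1) (f + g) := by
  refine ⟨fun t => if t = i then f else g, fun t ht => ?_, ?_⟩
  · obtain rfl | rfl : t = i ∨ t = i + 1 := by simp only [Finset.mem_Icc] at ht; omega
    · simpa using hf
    · simpa using hg
  · rw [Finset.sum_Icc_succ_top (Nat.le_succ i), Finset.Icc_self, Finset.sum_singleton]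
    simp

end General

section Tensor

variable {q : ℕ}

def tensor (φ ψ : Fin q → ℝ) : (Fin 2 → Fin q) → ℝ := fun x => φ (x 0) * ψ (x 1)

lemma tensor_add_left (φ₁ φ₂ ψ : Fin q → ℝ) :
    tensor (φ₁ + φ₂) ψ = tensor φ₁ ψ + tensor φ₂ ψ := by
  funext x; simp [tensor, add_mul]

lemma tensor_add_right (φ ψ₁ ψ₂ : Fin q → ℝ) :
    tensor φ (ψ₁ + ψ₂) = tensor φ ψ₁ + tensor φ ψ₂ := by
  funext x; simp [tensor, mul_add]

lemma sum_tensor (φ ψ : Fin q → ℝ) : ∑ x, tensor φ ψ x = (∑ s, φ s) * ∑ t, ψ t := by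
  simpa [tensor, Fin.prod_univ_two] using (Fintype.prod_sum fun (i : Fin 2) => ![φ, ψ] i).symm

lemma ite_hammingDist_eq_one {α : Type*} [DecidableEq α] (x y : Fin 2 → α) :
    (if hammingDist x y = 1 then (1 : ℝ) else 0) =
      (if x 1 = y 1 then 1 else 0) + (if x 0 = y 0 then 1 else 0)
        - 2 * (if x 0 = y 0 then 1 else 0) * (if x 1 = y 1 then 1 else 0) := by
  simp only [hammingDist, Finset.card_filter, Fin.sum_univ_two]
  by_cases h0 : x 0 = y 0 <;> by_cases h1 : x 1 = y 1 <;> norm_num [h0, h1]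

lemma adjSum_tensor (φ ψ : Fin q → ℝ) (x : Fin 2 → Fin q) :
    adjSum 2 q (tensor φ ψ) x =
      (∑ s, φ s) * ψ (x 1) + φ (x 0) * (∑ t, ψ t) - 2 * φ (x 0) * ψ (x 1) := by
  set φ₀ : Fin q → ℝ := fun s => if x 0 = s then φ s else 0
  set ψ₁ : Fin q → ℝ := fun t => if x 1 = t then ψ t else 0
  have hsplit : ∀ y, (if hammingDist x y = 1 then tensor φ ψ y else 0) =
      tensor φ ψ₁ y + tensor φ₀ ψ y - 2 * tensor φ₀ ψ₁ y := fun y => by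
    rw [← one_mul (tensor φ ψ y), ← ite_zero_mul, ite_hammingDist_eq_one]
    simp only [tensor, φ₀, ψ₁]
    split_ifs <;> ring
  simp only [adjSum, hsplit, Finset.sum_sub_distrib, Finset.sum_add_distrib, ← Finset.mul_sum,
    sum_tensor, φ₀, ψ₁, Finset.sum_ite_eq, Finset.mem_univ, if_true]
  ring

end Tensor

section Eigen

variable {q : ℕ}

lemma memU_one_tensor_const_right {φ : Fin q → ℝ} (hφ : ∑ s, φ s = 0) (c : ℝ) :
    memU 2 q 1 (tensor φ fun _ => c) := fun x => by
  simp only [adjSum_tensor, hφ, Finset.sum_const, Finset.card_univ, Fintype.card_fin, nsmul_eq_mul,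
    tensor]
  push_cast
  ring

lemma memU_one_tensor_const_left {ψ : Fin q → ℝ} (hψ : ∑ t, ψ t = 0) (c : ℝ) :
    memU 2 q 1 (tensor (fun _ => c) ψ) := fun x => by
  simp only [adjSum_tensor, hψ, Finset.sum_const, Finset.card_univ, Fintype.card_fin, nsmul_eq_mul,
    tensor]
  push_cast
  ring

lemma memU_two_tensor {φ ψ : Fin q → ℝ} (hφ : ∑ s, φ s = 0) (hψ : ∑ t, ψ t = 0) :
    memU 2 q 2 (tensor φ ψ) := fun x => by
  simp only [adjSum_tensor, hφ, hψ, tensor]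
  push_cast
  ring

lemma sum_sub_mean_eq_zero (φ : Fin q → ℝ) : ∑ s, (φ s - (∑ t, φ t) / q) = 0 := by
  rcases q.eq_zero_or_pos with rfl | hq
  · simp
  · rw [Finset.sum_sub_distrib, Finset.sum_const, Finset.card_univ, Fintype.card_fin, nsmul_eq_mul,
      mul_div_cancel₀ _ (by positivity), sub_self]

lemma memUI_tensor_of_sum_left_eq_zero {φ : Fin q → ℝ} (hφ : ∑ s, φ s = 0) (ψ : Fin q → ℝ) :
    memUI 2 q 1 2 (tensor φ ψ) := by
  have hψ : ψ = (fun _ => (∑ t, ψ t) / q) + fun s => ψ s - (∑ t, ψ t) / q := by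
    funext; simp
  rw [hψ, tensor_add_right]
  exact memUI_succ_add (memU_one_tensor_const_right hφ _)
    (memU_two_tensor hφ (sum_sub_mean_eq_zero ψ))

lemma memUI_tensor_of_sum_right_eq_zero {ψ : Fin q → ℝ} (hψ : ∑ t, ψ t = 0) (φ : Fin q → ℝ) :
    memUI 2 q 1 2 (tensor φ ψ) := by
  have hφ : φ = (fun _ => (∑ s, φ s) / q) + fun s => φ s - (∑ s, φ s) / q := by
    funext; simp
  rw [hφ, tensor_add_left]
  exact memUI_succ_add (memU_one_tensor_const_left hψ _)
    (memU_two_tensor (sum_sub_mean_eq_zero φ) hψ)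

end Eigen

section Dipole

variable {q : ℕ}

def diagDipole (c d : Fin q) : (Fin 2 → Fin q) → ℝ := fun x =>
  if x 0 = c ∧ x 1 = c then 1 else if x 0 = d ∧ x 1 = d then -1 else 0

lemma diagDipole_eq_tensor {c d : Fin q} (hcd : c ≠ d) :
    diagDipole c d = tensor (Pi.single c 1 - Pi.single d 1) (Pi.single c 1)
      + tensor (Pi.single d 1) (Pi.single c 1 - Pi.single d 1) := by
  funext x
  simp only [diagDipole, tensor, Pi.add_apply, Pi.sub_apply, Pi.single_apply]
  split_ifs <;> simp_all

lemma memUI_diagDipole {c d : Fin q} (hcd : c ≠ d) : memUI 2 q 1 2 (diagDipole c d) := by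
  have hsum : ∑ s, (Pi.single c 1 - Pi.single d 1 : Fin q → ℝ) s = 0 := by
    simp [Finset.sum_sub_distrib]
  rw [diagDipole_eq_tensor hcd]
  exact memUI_add (memUI_tensor_of_sum_left_eq_zero hsum _)
    (memUI_tensor_of_sum_right_eq_zero hsum _)

lemma suppCard_diagDipole {c d : Fin q} (hcd : c ≠ d) : suppCard 2 q (diagDipole c d) = 2 := by
  have hconst : ∀ (x : Fin 2 → Fin q) e, x = (fun _ => e) ↔ x 0 = e ∧ x 1 = e := fun x e => by
    rw [funext_iff, Fin.forall_fin_two]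
  have hsupp : {x | diagDipole c d x ≠ 0} = {fun _ => c, fun _ => d} := by
    ext x
    simp only [Set.mem_ofPred_eq, Set.mem_insert_iff, Set.mem_singleton_iff, hconst, diagDipole]
    split_ifs <;> simp_all
  change Nat.card {x | diagDipole c d x ≠ 0} = 2
  rw [Nat.card_coe_set_eq, hsupp, Set.ncard_pair fun h => hcd (congrFun h 0)]

end Dipole

/-- the function g with g(0,0)=1, g(q-1,q-1)=-1 and 0 elsewhere lies in
U_{[1,2]}(2,q) and its support has cardinality 2 = 2^1 (q-1)^{2-2}, the minimum. -/
theorem example_g_min_support (q : ℕ) (hq : 2 ≤ q)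
    (g : (Fin 2 → Fin q) → ℝ)
    (hg : g = fun x =>
      if x 0 = ⟨0, by omega⟩ ∧ x 1 = ⟨0, by omega⟩ then (1 : ℝ)
      else if x 0 = ⟨q - 1, by omega⟩ ∧ x 1 = ⟨q - 1, by omega⟩ then -1
      else 0) :
    memUI 2 q 1 2 g ∧ suppCard 2 q g = 2 ∧ 2 = 2 ^ 1 * (q - 1) ^ (2 - 2) := by
  have hcd : (⟨0, by omega⟩ : Fin q) ≠ ⟨q - 1, by omega⟩ := Fin.ne_of_val_ne (by dsimp only; omega)
  change g = diagDipole _ _ at hg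
  subst hg
  exact ⟨memUI_diagDipole hcd, suppCard_diagDipole hcd, rfl⟩
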